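/- There is no 4-divisible multiset of points in PG(v-1,2) of cardinality 9, for any v. -/

import Mathlib

open scoped Classical

noncomputable def MVal {F V : Type*} [Field F] [AddCommGroup V] [Module F V]
    (M : Projectivization F V → ℕ) (K : Submodule F V) : ℕ :=
  ∑ᶠ P ∈ {P : Projectivization F V | P.submodule ≤ K}, M P

def IsDivisible {F V : Type*} [Field F] [AddCommGroup V] [Module F V] (Δ : ℕ)
    (M : Projectivization F V → ℕ) : Prop :=
  ∀ H : Submodule F V, Module.finrank F H + 1 = Module.finrank F V →
    MVal M H ≡ MVal M ⊤ [MOD Δ]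

def IsSpanning {F V : Type*} [Field F] [AddCommGroup V] [Module F V]
    (M : Projectivization F V → ℕ) : Prop :=
  (⨆ P ∈ {P : Projectivization F V | 0 < M P}, P.submodule) = ⊤

def gaussNum (q k : ℕ) : ℕ := ∑ i ∈ Finset.range k, q ^ i

def IsProjBase {F V : Type*} [Field F] [AddCommGroup V] [Module F V]
    (n : ℕ) (B : Finset (Projectivization F V)) : Prop :=
  B.card = n ∧ ∀ T ⊆ B, T.card = n - 1 →
    Module.finrank F ((⨆ P ∈ T, Projectivization.submodule P) : Submodule F V) = n - 1

/-! Reading the points of the multiset as nonzero vectors `x` of `𝔽₂ᵛ`, the weight of `y` is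
the mass of the points with `y ⬝ᵥ x = 1`, i.e. outside the hyperplane `y⊥`; 4-divisibility makes
every weight a multiple of 4. Each point lies off `y⊥` for exactly half of all `y`, so the weights
average `9 / 2`. On the other hand no point lies off all three of `a⊥`, `b⊥`, `(a + b)⊥`, so
`w a + w b + w (a + b) ≤ 18`; for `b` of maximal weight this forces `w y + w (y + b) ≤ 8`, and
pairing `y` with `y + b` bounds the average weight by 4. -/

open Finset

theorem ZMod.eq_zero_or_eq_one_of_two (a : ZMod 2) : a = 0 ∨ a = 1 := by
  revert a; decide

theorem two_mul_sum_le_card_mul_of_translate {G : Type*} [AddGroup G] [Fintype G] (w : G → ℕ)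
    {b : G} {c : ℕ} (h : ∀ y, w y + w (y + b) ≤ c) : 2 * ∑ y, w y ≤ Fintype.card G * c :=
  calc 2 * ∑ y, w y = ∑ y, (w y + w (y + b)) := by
        rw [sum_add_distrib, two_mul, Fintype.sum_equiv (Equiv.addRight b) (fun y => w (y + b)) w
          fun _ => rfl]
    _ ≤ ∑ _y : G, c := sum_le_sum fun y _ => h y
    _ = Fintype.card G * c := by simp

namespace Projectivization

theorem mk_eq_mk_iff_eq_of_zmod_two {V : Type*} [AddCommGroup V] [Module (ZMod 2) V]
    {x y : V} (hx : x ≠ 0) (hy : y ≠ 0) : mk (ZMod 2) x hx = mk (ZMod 2) y hy ↔ x = y := by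
  refine ⟨fun h => ?_, fun h => by subst h; rfl⟩
  obtain ⟨a, rfl⟩ := (mk_eq_mk_iff' _ _ _ hx hy).1 h
  rcases a.eq_zero_or_eq_one_of_two with rfl | rfl
  · simp at hx
  · simp

end Projectivization

section VecMult

variable {V : Type*} [AddCommGroup V] [Module (ZMod 2) V]

noncomputable def vecMult (M : Projectivization (ZMod 2) V → ℕ) (x : V) : ℕ :=
  if hx : x = 0 then 0 else M (Projectivization.mk (ZMod 2) x hx)

@[simp]
theorem vecMult_zero (M : Projectivization (ZMod 2) V → ℕ) : vecMult M 0 = 0 :=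
  dif_pos rfl

theorem ne_zero_of_vecMult_ne_zero {M : Projectivization (ZMod 2) V → ℕ} {x : V}
    (h : vecMult M x ≠ 0) : x ≠ 0 := by
  rintro rfl
  exact h (vecMult_zero M)

theorem MVal_eq_sum_vecMult [Fintype V] (M : Projectivization (ZMod 2) V → ℕ)
    (K : Submodule (ZMod 2) V) : MVal M K = ∑ x with x ∈ K, vecMult M x := by
  rw [MVal, finsum_mem_eq_finite_toFinset_sum _ (Set.toFinite _)]
  symm
  refine sum_bij_ne_zero
    (fun x _ hx => Projectivization.mk (ZMod 2) x (ne_zero_of_vecMult_ne_zero hx)) ?_ ?_ ?_ ?_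
  · intro x hxK _
    simpa [Projectivization.submodule_mk, Submodule.span_singleton_le_iff_mem] using hxK
  · intro x _ _ y _ _ h
    exact (Projectivization.mk_eq_mk_iff_eq_of_zmod_two _ _).1 h
  · intro P hP hMP
    refine ⟨P.rep, ?_, ?_, P.mk_rep⟩
    · simp only [Set.Finite.mem_toFinset, Set.mem_ofPred_eq] at hP
      simpa using hP (P.submodule_eq ▸ Submodule.mem_span_singleton_self _)
    · rwa [vecMult, dif_neg P.rep_nonzero, P.mk_rep]
  · intro x _ hx
    rw [vecMult, dif_neg (ne_zero_of_vecMult_ne_zero hx)]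

end VecMult

section Weight

variable {ι : Type*} [Fintype ι] [DecidableEq ι]

def weight (m : (ι → ZMod 2) → ℕ) (y : ι → ZMod 2) : ℕ :=
  ∑ x with y ⬝ᵥ x = 1, m x

theorem weight_add_sum_ker (m : (ι → ZMod 2) → ℕ) (y : ι → ZMod 2) :
    weight m y + ∑ x with x ∈ LinearMap.ker (dotProductEquiv (ZMod 2) ι y), m x = ∑ x, m x := by
  rw [weight, ← sum_filter_add_sum_filter_not univ (fun x => y ⬝ᵥ x = 1)]
  congr 2
  ext x
  simp only [mem_filter, mem_univ, true_and, LinearMap.mem_ker, dotProductEquiv_apply_apply]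
  rcases (y ⬝ᵥ x).eq_zero_or_eq_one_of_two with h | h <;> simp [h]

theorem weight_add_weight_add_weight_add_le (m : (ι → ZMod 2) → ℕ) (a b : ι → ZMod 2) :
    weight m a + weight m b + weight m (a + b) ≤ 2 * ∑ x, m x := by
  simp only [weight, sum_filter, ← sum_add_distrib, mul_sum, add_dotProduct]
  refine sum_le_sum fun x _ => ?_
  rcases (a ⬝ᵥ x).eq_zero_or_eq_one_of_two with ha | ha <;>
    rcases (b ⬝ᵥ x).eq_zero_or_eq_one_of_two with hb | hb <;>
    simp [ha, hb, show (1 : ZMod 2) + 1 = 0 from rfl] <;> omega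

theorem two_mul_card_dotProduct_eq_one {x : ι → ZMod 2} (hx : x ≠ 0) :
    2 * #{y : ι → ZMod 2 | y ⬝ᵥ x = 1} = 2 ^ Fintype.card ι := by
  set f := dotProductEquiv (ZMod 2) ι x
  have hf : Function.Surjective f := LinearMap.range_eq_top.1 <|
    Module.Dual.range_eq_top_of_ne_zero ((dotProductEquiv (ZMod 2) ι).map_ne_zero_iff.2 hx)
  have hfibres : #{y | f y = 1} = #{y | f y = 0} :=
    AddMonoidHom.card_fiber_eq_of_mem_range f (hf 1) (hf 0)
  have hsplit : #{y | f y = 1} + #{y | f y = 0} = 2 ^ Fintype.card ι := by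
    have hnot : ∀ y, ¬f y = 1 ↔ f y = 0 := fun y => by
      rcases (f y).eq_zero_or_eq_one_of_two with h | h <;> simp [h]
    simp_rw [← hnot]
    rw [card_filter_add_card_filter_not, card_univ, Fintype.card_fun, ZMod.card]
  have hcomm : ∀ y, y ⬝ᵥ x = f y := fun y => dotProduct_comm y x
  simp only [hcomm]
  omega

theorem two_mul_sum_weight {m : (ι → ZMod 2) → ℕ} (hm : m 0 = 0) :
    2 * ∑ y, weight m y = 2 ^ Fintype.card ι * ∑ x, m x := by
  simp only [weight, sum_filter]
  rw [sum_comm, mul_sum, mul_sum]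
  refine sum_congr rfl fun x _ => ?_
  rcases eq_or_ne x 0 with rfl | hx
  · simp [hm]
  · rw [← sum_filter, sum_const, smul_eq_mul, ← mul_assoc, two_mul_card_dotProduct_eq_one hx,
      mul_comm]

theorem dvd_weight_vecMult_of_isDivisible {Δ : ℕ}
    {M : Projectivization (ZMod 2) (ι → ZMod 2) → ℕ} (hdiv : IsDivisible Δ M)
    (y : ι → ZMod 2) : Δ ∣ weight (vecMult M) y := by
  rcases eq_or_ne y 0 with rfl | hy
  · simp [weight]
  have hH := hdiv (LinearMap.ker (dotProductEquiv (ZMod 2) ι y)) <|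
    Module.Dual.finrank_ker_add_one_of_ne_zero ((dotProductEquiv (ZMod 2) ι).map_ne_zero_iff.2 hy)
  rw [MVal_eq_sum_vecMult, MVal_eq_sum_vecMult] at hH
  simp only [Submodule.mem_top, filter_true] at hH
  rw [← weight_add_sum_ker (vecMult M) y] at hH
  simpa using (Nat.modEq_iff_dvd' (Nat.le_add_left _ _)).1 hH

theorem sum_ne_nine_of_four_dvd_weight {m : (ι → ZMod 2) → ℕ} (hm : m 0 = 0)
    (hdvd : ∀ y, 4 ∣ weight m y) : ∑ x, m x ≠ 9 := by
  intro h9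
  obtain ⟨b, -, hb⟩ := exists_max_image univ (weight m) univ_nonempty
  have hpair : ∀ y, weight m y + weight m (y + b) ≤ 8 := fun y => by
    have := weight_add_weight_add_weight_add_le m y b
    have := hb y (mem_univ _)
    have := hb (y + b) (mem_univ _)
    have := hdvd y
    have := hdvd b
    have := hdvd (y + b)
    omega
  have hupper := two_mul_sum_le_card_mul_of_translate (weight m) hpair
  have hexact := two_mul_sum_weight hm
  simp only [Fintype.card_fun, ZMod.card, h9] at hupper hexact
  have : 0 < 2 ^ Fintype.card ι := by positivity
  omega

end Weight

theorem stmt_12 (v : ℕ) (M : Projectivization (ZMod 2) (Fin v → ZMod 2) → ℕ)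
    (hdiv : IsDivisible 4 M) : MVal M ⊤ ≠ 9 := by
  rw [MVal_eq_sum_vecMult]
  simpa using sum_ne_nine_of_four_dvd_weight (vecMult_zero M) (dvd_weight_vecMult_of_isDivisible hdiv)
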